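/- arXiv:1907.01065 — 2 statements merged into one kernel-verified Lean document; each statement's English description precedes it below -/
import Mathlib

section
/- Let $\gamma > 1$, $\delta > 0$, and let $\accentset{\circ}{\rho} : [0,1] \to \mathbb{R}$ be continuous on $[0,1]$, $C^1$ on $[0,1)$, positive on $[0,1)$, with $\accentset{\circ}{\rho}(1) = 0$, and suppose there exists $\sigma > 0$ and $L \in (0,\infty)$ such that $\lim_{r \to 1^-} (1-r)^{-\sigma} \accentset{\circ}{\rho}(r) = L$. Define $E(r) = \delta \int_r^1 \ell \, \accentset{\circ}{\rho}(\ell) \, d\ell / \accentset{\circ}{\rho}(r)^{\gamma}$ for $r \in [0,1)$. Then $0 < E(r) < \infty$ for all $r \in [0,1)$, and $\lim_{r \to 1^-} E(r)$ equals $\infty$ if $\sigma(\gamma-1) > 1$, equals $\delta L^{1-\gamma}/(\sigma\gamma)$ if $\sigma(\gamma-1) = 1$, and equals $0$ if $\sigma(\gamma-1) < 1$. -/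
/-! Near the vacuum boundary `r = 1` we have `ρ r ≈ L (1 - r) ^ σ`, and by L'Hôpital's rule the
pressure `∫ ℓ in r..1, ℓ * ρ ℓ` behaves like `L (1 - r) ^ (σ + 1) / (σ + 1)`. Hence
`E r ≈ δ L ^ (1 - γ) / (σ + 1) · (1 - r) ^ (1 - σ (γ - 1))`, and the sign of the exponent
`1 - σ (γ - 1)` decides the limit; in the critical case `σ + 1 = σ γ`. -/

open Set Filter MeasureTheory intervalIntegral Topology

lemma tendsto_sub_nhdsLT_nhdsGT_zero (b : ℝ) : Tendsto (fun r => b - r) (𝓝[<] b) (𝓝[>] 0) := by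
  refine tendsto_nhdsWithin_of_tendsto_nhds_of_eventually_within _ ?_ ?_
  · simpa using ((continuous_sub_left b).tendsto b).mono_left nhdsWithin_le_nhds
  · filter_upwards [self_mem_nhdsWithin] with r (hr : r < b)
    exact sub_pos.2 hr

section LeftLimits

variable {b : ℝ}

lemma tendsto_sub_rpow_nhdsLT_zero {e : ℝ} (he : 0 < e) :
    Tendsto (fun r => (b - r) ^ e) (𝓝[<] b) (𝓝 0) := by
  have h := (Real.continuousAt_rpow_const 0 e (Or.inr he.le)).tendsto
  rw [Real.zero_rpow he.ne'] at h
  exact h.comp ((tendsto_sub_nhdsLT_nhdsGT_zero b).mono_right nhdsWithin_le_nhds)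

lemma tendsto_sub_rpow_nhdsLT_atTop {e : ℝ} (he : e < 0) :
    Tendsto (fun r => (b - r) ^ e) (𝓝[<] b) atTop :=
  (tendsto_rpow_neg_nhdsGT_zero he).comp (tendsto_sub_nhdsLT_nhdsGT_zero b)

lemma hasDerivAt_sub_rpow {r σ : ℝ} (hr : r < b) :
    HasDerivAt (fun r => (b - r) ^ (σ + 1)) (-((σ + 1) * (b - r) ^ σ)) r := by
  have h := ((hasDerivAt_id r).const_sub b).rpow_const (p := σ + 1) (Or.inl (sub_pos.2 hr).ne')
  refine h.congr_deriv ?_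
  rw [id, add_sub_cancel_right]
  ring

end LeftLimits

theorem tendsto_integral_div_sub_rpow {g : ℝ → ℝ} {a b σ L : ℝ} (hab : a < b) (hσ : -1 < σ)
    (hg : ContinuousOn g (Icc a b))
    (hlim : Tendsto (fun r => (b - r) ^ (-σ) * g r) (𝓝[<] b) (𝓝 L)) :
    Tendsto (fun r => (∫ ℓ in r..b, g ℓ) / (b - r) ^ (σ + 1)) (𝓝[<] b) (𝓝 (L / (σ + 1))) := by
  have hσ1 : 0 < σ + 1 := by linarith
  have hIoo := Ioo_mem_nhdsLT hab
  have hderiv : ∀ᶠ r in 𝓝[<] b, HasDerivAt (fun r => ∫ ℓ in r..b, g ℓ) (-g r) r := by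
    filter_upwards [hIoo] with r hr
    have hgIoo : ContinuousOn g (Ioo a b) := hg.mono Ioo_subset_Icc_self
    refine integral_hasDerivAt_left ?_ (hgIoo.stronglyMeasurableAtFilter isOpen_Ioo r hr)
      (hgIoo.continuousAt (Ioo_mem_nhds hr.1 hr.2))
    exact (hg.mono (Icc_subset_Icc hr.1.le le_rfl)).intervalIntegrable_of_Icc hr.2.le
  have hint_zero : Tendsto (fun r => ∫ ℓ in r..b, g ℓ) (𝓝[<] b) (𝓝 0) := by
    have h := continuousOn_primitive_interval_left (μ := volume) (b := b)
      ((hg.integrableOn_Icc).mono_set (uIcc_of_le hab.le).subset) b right_mem_uIcc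
    rw [uIcc_of_le hab.le, ContinuousWithinAt, integral_same] at h
    exact h.mono_left (nhdsWithin_le_of_mem (Icc_mem_nhdsLT hab))
  refine HasDerivAt.lhopital_zero_nhdsLT hderiv
    (eventually_nhdsWithin_of_forall fun r hr => hasDerivAt_sub_rpow hr) ?_ hint_zero
    (tendsto_sub_rpow_nhdsLT_zero hσ1) ?_
  · filter_upwards [self_mem_nhdsWithin] with r (hr : r < b)
    have := Real.rpow_pos_of_pos (sub_pos.2 hr) σ
    exact neg_ne_zero.2 (by positivity)
  · refine (hlim.div_const (σ + 1)).congr' ?_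
    filter_upwards [self_mem_nhdsWithin] with r (hr : r < b)
    rw [neg_div_neg_eq, Real.rpow_neg (sub_pos.2 hr).le]
    field_simp

lemma div_rpow_eq_rescale {x p t σ γ : ℝ} (hp : 0 < p) (ht : 0 < t) :
    x / p ^ γ = x / t ^ (σ + 1) * (t ^ (-σ) * p) ^ (-γ) * t ^ (1 - σ * (γ - 1)) := by
  have hexp : t ^ (-σ * -γ) * t ^ (1 - σ * (γ - 1)) = t ^ (σ + 1) := by
    rw [← Real.rpow_add ht]; ring_nf
  have htσ : t ^ (σ + 1) ≠ 0 := (Real.rpow_pos_of_pos ht _).ne'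
  rw [Real.mul_rpow (Real.rpow_nonneg ht.le _) hp.le, ← Real.rpow_mul ht.le,
    Real.rpow_neg hp.le, mul_assoc, mul_right_comm _ _ (t ^ (1 - σ * (γ - 1))), hexp]
  field_simp

lemma tendsto_scaled_entropy {σ L : ℝ} (γ δ : ℝ) (hσ : -1 < σ) (hL : 0 < L) {ρ : ℝ → ℝ}
    (hcont : ContinuousOn ρ (Icc 0 1))
    (hlim : Tendsto (fun r => (1 - r) ^ (-σ) * ρ r) (𝓝[<] 1) (𝓝 L)) :
    Tendsto (fun r => δ * ((∫ ℓ in r..1, ℓ * ρ ℓ) / (1 - r) ^ (σ + 1)) *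
      ((1 - r) ^ (-σ) * ρ r) ^ (-γ)) (𝓝[<] 1) (𝓝 (δ * (L / (σ + 1)) * L ^ (-γ))) := by
  have hgLim : Tendsto (fun r => (1 - r) ^ (-σ) * (r * ρ r)) (𝓝[<] 1) (𝓝 L) := by
    have h := (tendsto_id.mono_left (nhdsWithin_le_nhds (s := Iio (1:ℝ)))).mul hlim
    rw [one_mul] at h
    exact h.congr fun r => mul_left_comm _ _ _
  exact ((tendsto_integral_div_sub_rpow zero_lt_one hσ
    (continuousOn_id.mul hcont) hgLim).const_mul δ).mul
      ((Real.continuousAt_rpow_const L (-γ) (Or.inl hL.ne')).tendsto.comp hlim)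

theorem entropy_limit_general (γ δ σ L : ℝ) (hδ : 0 < δ) (hσ : 0 < σ) (hL : 0 < L)
    (ρ : ℝ → ℝ)
    (hcont : ContinuousOn ρ (Icc 0 1))
    (hpos : ∀ r ∈ Ico (0:ℝ) 1, 0 < ρ r)
    (hlim : Tendsto (fun r => (1 - r) ^ (-σ) * ρ r) (nhdsWithin 1 (Iio 1)) (nhds L))
    (E : ℝ → ℝ)
    (hE : ∀ r ∈ Ico (0:ℝ) 1, E r = δ * (∫ ℓ in r..1, ℓ * ρ ℓ) / (ρ r) ^ γ) :
    (∀ r ∈ Ico (0:ℝ) 1, 0 < E r) ∧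
    (1 < σ * (γ - 1) → Tendsto E (nhdsWithin 1 (Iio 1)) atTop) ∧
    (σ * (γ - 1) = 1 → Tendsto E (nhdsWithin 1 (Iio 1)) (nhds (δ * L ^ (1 - γ) / (σ * γ)))) ∧
    (σ * (γ - 1) < 1 → Tendsto E (nhdsWithin 1 (Iio 1)) (nhds 0)) := by
  set K := δ * (L / (σ + 1)) * L ^ (-γ)
  have hK : 0 < K := by positivity
  have hG := tendsto_scaled_entropy γ δ (by linarith) hL hcont hlim
  have hEeq : E =ᶠ[𝓝[<] 1] fun r => δ * ((∫ ℓ in r..1, ℓ * ρ ℓ) / (1 - r) ^ (σ + 1)) *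
      ((1 - r) ^ (-σ) * ρ r) ^ (-γ) * (1 - r) ^ (1 - σ * (γ - 1)) := by
    filter_upwards [Ioo_mem_nhdsLT zero_lt_one] with r hr
    rw [hE r ⟨hr.1.le, hr.2⟩, mul_div_assoc,
      div_rpow_eq_rescale (hpos r ⟨hr.1.le, hr.2⟩) (sub_pos.2 hr.2)]
    ring
  refine ⟨fun r hr => ?_, fun hsup => ?_, fun hcrit => ?_, fun hsub => ?_⟩
  · have hI : 0 < ∫ ℓ in r..1, ℓ * ρ ℓ := intervalIntegral_pos_of_pos_on
      (((continuousOn_id.mul hcont).mono (Icc_subset_Icc hr.1 le_rfl)).intervalIntegrable_of_Icc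
        hr.2.le)
      (fun ℓ hℓ => mul_pos (hr.1.trans_lt hℓ.1) (hpos ℓ ⟨(hr.1.trans_lt hℓ.1).le, hℓ.2⟩)) hr.2
    have := hpos r hr
    rw [hE r hr]
    positivity
  · exact (hG.pos_mul_atTop hK (tendsto_sub_rpow_nhdsLT_atTop (by linarith))).congr' hEeq.symm
  · have hval : δ * L ^ (1 - γ) / (σ * γ) = K := by
      rw [show σ * γ = σ + 1 by linarith, sub_eq_add_neg, Real.rpow_add hL, Real.rpow_one]
      ring
    rw [hval]
    refine hG.congr' ?_
    filter_upwards [hEeq] with r hr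
    rw [hr, hcrit, sub_self, Real.rpow_zero, mul_one]
  · simpa using (hG.mul (tendsto_sub_rpow_nhdsLT_zero (by linarith))).congr' hEeq.symm

theorem entropy_limit (γ δ σ L : ℝ) (hγ : 1 < γ) (hδ : 0 < δ) (hσ : 0 < σ) (hL : 0 < L)
    (ρ : ℝ → ℝ)
    (hcont : ContinuousOn ρ (Icc 0 1))
    (hC1 : ContDiffOn ℝ 1 ρ (Ico 0 1))
    (hpos : ∀ r ∈ Ico (0:ℝ) 1, 0 < ρ r)
    (hvac : ρ 1 = 0)
    (hlim : Tendsto (fun r => (1 - r) ^ (-σ) * ρ r) (nhdsWithin 1 (Iio 1)) (nhds L))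
    (E : ℝ → ℝ)
    (hE : ∀ r ∈ Ico (0:ℝ) 1, E r = δ * (∫ ℓ in r..1, ℓ * ρ ℓ) / (ρ r) ^ γ) :
    (∀ r ∈ Ico (0:ℝ) 1, 0 < E r) ∧
    (1 < σ * (γ - 1) → Tendsto E (nhdsWithin 1 (Iio 1)) atTop) ∧
    (σ * (γ - 1) = 1 → Tendsto E (nhdsWithin 1 (Iio 1)) (nhds (δ * L ^ (1 - γ) / (σ * γ)))) ∧
    (σ * (γ - 1) < 1 → Tendsto E (nhdsWithin 1 (Iio 1)) (nhds 0)) :=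
  entropy_limit_general γ δ σ L hδ hσ hL ρ hcont hpos hlim E hE
end

section
/- Let $\gamma > 1$, $\delta > 0$, $k \in \mathbb{Z}_{\geq 0}$, and let $\phi \in C^k([0,1])$ with $\phi > 0$ on $[0,1]$. Define $E(r) = \frac{\delta \int_r^1 \ell\, \phi(\ell) (1-\ell)^{1/(\gamma-1)} \, d\ell}{(1-r)^{\gamma/(\gamma-1)} \phi(r)^{\gamma}}$ for $r \in [0,1)$. Then $E$ extends to a function in $C^k([0,1])$, and moreover there exist constants $0 < c \leq C$ such that $c \leq E(r) \leq C$ for all $r \in [0,1]$, and $|(d/dr)^j E(r)| \leq C$ for all $1 \leq j \leq k$ and $r \in [0,1]$. -/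
/-!
With `σ = 1/(γ-1)` and `g` a `C^k` extension to `ℝ` of `u ↦ (1-u) φ(1-u)`, the substitutions
`ℓ = 1 - u`, `u = (1-r) t` give `∫_r^1 ℓ φ(ℓ) (1-ℓ)^σ dℓ = (1-r)^(σ+1) Φ(1-r)` with
`Φ(s) = ∫_0^1 t^σ g(s t) dt`. Since `γ/(γ-1) = σ+1`, the vacuum factor cancels exactly and
`E(r) = δ Φ(1-r) / φ(r)^γ` on `[0,1)`. Differentiating under the integral sign shows that `Φ` is
`C^k` on all of `ℝ`, and `Φ > 0` on `[0,1]`, so the right-hand side is a positive `C^k` function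
on the compact interval `[0,1]`, hence bounded above and below together with its derivatives.
-/

open Set intervalIntegral MeasureTheory

section

variable {E : Type*} [NormedAddCommGroup E] [NormedSpace ℝ E] {a b : ℝ}

theorem integral_derivWithin_Icc_eq_sub [CompleteSpace E] {f : ℝ → E}
    (hf : ContDiffOn ℝ 1 f (Icc a b)) (hab : a < b) {x : ℝ} (hx : x ∈ Icc a b) :
    ∫ t in a..x, derivWithin f (Icc a b) t = f x - f a := by
  have hsub : Icc a x ⊆ Icc a b := Icc_subset_Icc le_rfl hx.2
  refine integral_eq_sub_of_hasDeriv_right_of_le hx.1 (hf.continuousOn.mono hsub)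
    (fun t ht => ?_) ?_
  · have hnhds : Icc a b ∈ nhds t := Icc_mem_nhds ht.1 (ht.2.trans_le hx.2)
    exact ((hf.differentiableOn one_ne_zero t (hsub (Ioo_subset_Icc_self ht))).hasDerivWithinAt
      |>.hasDerivAt hnhds).hasDerivWithinAt
  · refine (((hf.continuousOn_derivWithin (uniqueDiffOn_Icc hab) le_rfl).mono hsub).mono ?_
      ).intervalIntegrable
    rw [uIcc_of_le hx.1]

theorem ContDiffOn.exists_contDiff_eqOn_Icc [CompleteSpace E] {k : ℕ} {f : ℝ → E}
    (hf : ContDiffOn ℝ k f (Icc a b)) (hab : a < b) :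
    ∃ g : ℝ → E, ContDiff ℝ k g ∧ EqOn g f (Icc a b) := by
  induction k generalizing f with
  | zero =>
    refine ⟨IccExtend hab.le ((Icc a b).domRestrict f), ?_, fun x hx => IccExtend_of_mem _ _ hx⟩
    rw [Nat.cast_zero, contDiff_zero]
    exact (continuousOn_iff_continuous_domRestrict.mp (contDiffOn_zero.mp hf)).Icc_extend'
  | succ k ih =>
    obtain ⟨g', hg', hg'f⟩ :=
      ih (hf.derivWithin (uniqueDiffOn_Icc hab) (by exact_mod_cast le_rfl))
    have hderiv (x : ℝ) : HasDerivAt (fun x => f a + ∫ t in a..x, g' t) (g' x) x :=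
      (integral_hasDerivAt_right (hg'.continuous.intervalIntegrable a x)
        (hg'.continuous.stronglyMeasurableAtFilter _ _) hg'.continuous.continuousAt).const_add _
    refine ⟨fun x => f a + ∫ t in a..x, g' t, ?_, fun x hx => ?_⟩
    · rw [Nat.cast_succ, contDiff_succ_iff_deriv]
      refine ⟨fun x => (hderiv x).differentiableAt, by simp, ?_⟩
      rwa [funext fun x => (hderiv x).deriv]
    · have hsub : uIcc a x ⊆ Icc a b := by rw [uIcc_of_le hx.1]; exact Icc_subset_Icc le_rfl hx.2
      show f a + ∫ t in a..x, g' t = f x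
      rw [integral_congr fun t ht => hg'f (hsub ht),
        integral_derivWithin_Icc_eq_sub (hf.of_le (by exact_mod_cast le_add_self)) hab hx]
      abel

theorem hasDerivAt_intervalIntegral_smul_comp_mul {h : ℝ → E} {w : ℝ → ℝ}
    (hh : ContDiff ℝ 1 h) (hw : Continuous w) (s₀ : ℝ) :
    HasDerivAt (fun s => ∫ t in a..b, w t • h (s * t))
      (∫ t in a..b, (t * w t) • deriv h (s₀ * t)) s₀ := by
  have hdiff : Differentiable ℝ h := hh.differentiable one_ne_zero
  have hcont' : Continuous (deriv h) := hh.continuous_deriv le_rfl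
  have hF (s : ℝ) : Continuous fun t => w t • h (s * t) := by fun_prop
  have hF' : Continuous fun p : ℝ × ℝ => (p.2 * w p.2) • deriv h (p.1 * p.2) := by fun_prop
  obtain ⟨M, hM⟩ := ((isCompact_closedBall s₀ 1).prod (isCompact_uIcc (a := a) (b := b)))
    |>.exists_bound_of_continuousOn hF'.continuousOn
  refine (hasDerivAt_integral_of_dominated_loc_of_deriv_le (bound := fun _ => M)
    (F' := fun s t => (t * w t) • deriv h (s * t)) (Metric.ball_mem_nhds s₀ zero_lt_one)
    (.of_forall fun s => (hF s).aestronglyMeasurable) ((hF s₀).intervalIntegrable a b)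
    (hF'.comp (Continuous.prodMk_right s₀)).aestronglyMeasurable ?_ intervalIntegrable_const
    ?_).2
  · exact .of_forall fun t ht s hs =>
      hM (s, t) ⟨Metric.ball_subset_closedBall hs, uIoc_subset_uIcc ht⟩
  · refine .of_forall fun t _ s _ => ?_
    have hmul : HasDerivAt (fun s : ℝ => s * t) t s := by simpa using (hasDerivAt_id s).mul_const t
    exact (((hdiff (s * t)).hasDerivAt.scomp s hmul).const_smul (w t)).congr_deriv
      (by rw [smul_smul, mul_comm])

theorem contDiff_intervalIntegral_smul_comp_mul {m : ℕ} {h : ℝ → E} {w : ℝ → ℝ}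
    (hh : ContDiff ℝ m h) (hw : Continuous w) :
    ContDiff ℝ m fun s => ∫ t in a..b, w t • h (s * t) := by
  induction m generalizing h w with
  | zero =>
    rw [Nat.cast_zero, contDiff_zero] at hh ⊢
    exact continuous_parametric_intervalIntegral_of_continuous' (by fun_prop) a b
  | succ m ih =>
    have hderiv := hasDerivAt_intervalIntegral_smul_comp_mul (a := a) (b := b)
      (hh.of_le (by exact_mod_cast le_add_self)) hw
    rw [Nat.cast_succ, contDiff_succ_iff_deriv] at hh ⊢
    refine ⟨fun s => (hderiv s).differentiableAt, by simp, ?_⟩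
    rw [funext fun s => (hderiv s).deriv]
    exact ih hh.2.2 (by fun_prop)

theorem integral_rpow_smul_eq_rpow_smul_integral_comp_mul (g : ℝ → E) (σ : ℝ) {s : ℝ}
    (hs : 0 < s) :
    ∫ u in (0:ℝ)..s, u ^ σ • g u = s ^ (σ + 1) • ∫ t in (0:ℝ)..1, t ^ σ • g (s * t) := by
  have hscale := integral_comp_mul_left (a := 0) (b := 1) (fun u => u ^ σ • g u) hs.ne'
  simp only [mul_zero, mul_one] at hscale
  calc ∫ u in (0:ℝ)..s, u ^ σ • g u = s • ∫ t in (0:ℝ)..1, (s * t) ^ σ • g (s * t) := by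
        rw [hscale, smul_inv_smul₀ hs.ne']
    _ = s • ∫ t in (0:ℝ)..1, s ^ σ • t ^ σ • g (s * t) := by
        refine congrArg _ (integral_congr fun t ht => ?_)
        rw [uIcc_of_le zero_le_one] at ht
        simp only [Real.mul_rpow hs.le ht.1, smul_smul]
    _ = s ^ (σ + 1) • ∫ t in (0:ℝ)..1, t ^ σ • g (s * t) := by
        rw [intervalIntegral.integral_smul, smul_smul, Real.rpow_add_one hs.ne', mul_comm]

theorem ContDiffOn.exists_bound_iteratedDerivWithin {k : ℕ} {F : ℝ → E} {s : Set ℝ}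
    (hF : ContDiffOn ℝ k F s) (hs : IsCompact s) (hs' : UniqueDiffOn ℝ s) :
    ∃ C, ∀ j ≤ k, ∀ r ∈ s, ‖iteratedDerivWithin j F s r‖ ≤ C := by
  have hbound (j : ℕ) (hj : j ∈ Finset.range (k + 1)) :
      ∀ᶠ C in Filter.atTop, ∀ r ∈ s, ‖iteratedDerivWithin j F s r‖ ≤ C := by
    obtain ⟨C, hC⟩ := hs.exists_bound_of_continuousOn
      (hF.continuousOn_iteratedDerivWithin (by exact_mod_cast Finset.mem_range_succ_iff.mp hj) hs')
    exact (Filter.eventually_ge_atTop C).mono fun C' hC' r hr => (hC r hr).trans hC'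
  obtain ⟨C, hC⟩ := ((Filter.eventually_all_finset _).mpr hbound).exists
  exact ⟨C, fun j hj => hC j (Finset.mem_range_succ_iff.mpr hj)⟩

end

theorem intervalIntegral_rpow_mul_comp_mul_pos {g : ℝ → ℝ} (hg : Continuous g)
    (hpos : ∀ u ∈ Ico (0:ℝ) 1, 0 < g u) {σ : ℝ} (hσ : 0 ≤ σ) {s : ℝ} (hs : s ∈ Icc (0:ℝ) 1) :
    0 < ∫ t in (0:ℝ)..1, t ^ σ * g (s * t) := by
  refine intervalIntegral_pos_of_pos_on (Continuous.intervalIntegrable (by fun_prop) _ _)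
    (fun t ht => mul_pos (Real.rpow_pos_of_pos ht.1 σ) (hpos _ ⟨?_, ?_⟩)) zero_lt_one
  · exact mul_nonneg hs.1 ht.1.le
  · nlinarith [mul_le_mul_of_nonneg_right hs.2 ht.1.le, ht.2]

theorem ContDiffOn.exists_pos_bounds_iteratedDerivWithin {k : ℕ} {F : ℝ → ℝ} {s : Set ℝ}
    (hF : ContDiffOn ℝ k F s) (hs : IsCompact s) (hs' : UniqueDiffOn ℝ s) (hne : s.Nonempty)
    (hpos : ∀ r ∈ s, 0 < F r) :
    ∃ c C : ℝ, 0 < c ∧ c ≤ C ∧ (∀ r ∈ s, c ≤ F r ∧ F r ≤ C) ∧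
      ∀ j ≤ k, ∀ r ∈ s, |iteratedDerivWithin j F s r| ≤ C := by
  obtain ⟨C, hC⟩ := hF.exists_bound_iteratedDerivWithin hs hs'
  have hFC (r : ℝ) (hr : r ∈ s) : F r ≤ C :=
    (le_abs_self _).trans (by simpa using hC 0 (Nat.zero_le k) r hr)
  obtain ⟨r₀, hr₀, hmin⟩ := hs.exists_isMinOn hne hF.continuousOn
  exact ⟨F r₀, C, hpos r₀ hr₀, hFC r₀ hr₀, fun r hr => ⟨hmin hr, hFC r hr⟩, hC⟩

theorem integral_mul_rpow_one_sub_eq {φ g : ℝ → ℝ}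
    (hgφ : EqOn g (fun u => (1 - u) * φ (1 - u)) (Icc 0 1)) (σ : ℝ) {r : ℝ}
    (hr : r ∈ Ico (0:ℝ) 1) :
    ∫ ℓ in r..1, ℓ * φ ℓ * (1 - ℓ) ^ σ
      = (1 - r) ^ (σ + 1) * ∫ t in (0:ℝ)..1, t ^ σ * g ((1 - r) * t) :=
  calc ∫ ℓ in r..1, ℓ * φ ℓ * (1 - ℓ) ^ σ = ∫ ℓ in r..1, (1 - ℓ) ^ σ * g (1 - ℓ) := by
        refine integral_congr fun ℓ hℓ => ?_
        rw [uIcc_of_le hr.2.le] at hℓ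
        rw [hgφ ⟨by linarith [hℓ.2], by linarith [hr.1, hℓ.1]⟩]
        simp only [sub_sub_cancel]
        ring
    _ = ∫ u in (0:ℝ)..1 - r, u ^ σ * g u := by
        rw [integral_comp_sub_left (fun u => u ^ σ * g u), sub_self]
    _ = _ := integral_rpow_smul_eq_rpow_smul_integral_comp_mul g σ (sub_pos.2 hr.2)

theorem entropy_Ck_regularity_and_bounds (γ δ : ℝ) (hγ : 1 < γ) (hδ : 0 < δ) (k : ℕ)
    (φ : ℝ → ℝ) (hφ : ContDiffOn ℝ k φ (Icc 0 1))
    (hφpos : ∀ r ∈ Icc (0:ℝ) 1, 0 < φ r)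
    (E : ℝ → ℝ)
    (hE : ∀ r ∈ Ico (0:ℝ) 1,
      E r = δ * (∫ ℓ in r..1, ℓ * φ ℓ * (1 - ℓ) ^ (1/(γ-1)))
              / ((1 - r) ^ (γ/(γ-1)) * (φ r) ^ γ)) :
    ∃ F : ℝ → ℝ, ContDiffOn ℝ k F (Icc 0 1) ∧ (∀ r ∈ Ico (0:ℝ) 1, F r = E r) ∧
      ∃ c C : ℝ, 0 < c ∧ c ≤ C ∧
        (∀ r ∈ Icc (0:ℝ) 1, c ≤ F r ∧ F r ≤ C) ∧
        (∀ j : ℕ, 1 ≤ j → j ≤ k → ∀ r ∈ Icc (0:ℝ) 1,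
          |iteratedDerivWithin j F (Icc 0 1) r| ≤ C) := by
  have hγσ : γ / (γ - 1) = 1 / (γ - 1) + 1 := by
    field_simp [(sub_pos.2 hγ).ne']
    ring
  set σ := 1 / (γ - 1)
  have hσ : 0 < σ := one_div_pos.2 (sub_pos.2 hγ)
  have hrefl : MapsTo (fun u : ℝ => 1 - u) (Icc 0 1) (Icc 0 1) :=
    fun u hu => ⟨by linarith [hu.2], by linarith [hu.1]⟩
  obtain ⟨g, hg, hgφ⟩ := ((contDiffOn_const.sub contDiffOn_id).mul
    (hφ.comp (contDiffOn_const.sub contDiffOn_id) hrefl)).exists_contDiff_eqOn_Icc zero_lt_one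
  set Φ := fun s => ∫ t in (0:ℝ)..1, t ^ σ * g (s * t)
  have hΦ : ContDiff ℝ k Φ :=
    contDiff_intervalIntegral_smul_comp_mul hg (Real.continuous_rpow_const hσ.le)
  have hΦpos : ∀ s ∈ Icc (0:ℝ) 1, 0 < Φ s := fun s hs =>
    intervalIntegral_rpow_mul_comp_mul_pos hg.continuous (fun u hu => by
      rw [hgφ ⟨hu.1, hu.2.le⟩]
      exact mul_pos (sub_pos.2 hu.2) (hφpos _ (hrefl ⟨hu.1, hu.2.le⟩))) hσ.le hs
  set F := fun r => δ * Φ (1 - r) / φ r ^ γ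
  have hF : ContDiffOn ℝ k F (Icc 0 1) :=
    ((contDiff_const.mul (hΦ.comp (contDiff_const.sub contDiff_id))).contDiffOn).div
      (hφ.rpow_const_of_ne fun r hr => (hφpos r hr).ne')
      fun r hr => (Real.rpow_pos_of_pos (hφpos r hr) γ).ne'
  obtain ⟨c, C, hc, hcC, hFcC, hC⟩ := hF.exists_pos_bounds_iteratedDerivWithin isCompact_Icc
    (uniqueDiffOn_Icc one_pos) (nonempty_Icc.2 zero_le_one) fun r hr =>
      div_pos (mul_pos hδ (hΦpos _ (hrefl hr))) (Real.rpow_pos_of_pos (hφpos r hr) γ)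
  refine ⟨F, hF, fun r hr => ?_, c, C, hc, hcC, hFcC, fun j _ hj => hC j hj⟩
  rw [hE r hr, integral_mul_rpow_one_sub_eq hgφ σ hr, hγσ, mul_left_comm,
    mul_div_mul_left _ _ (Real.rpow_pos_of_pos (sub_pos.2 hr.2) _).ne']
end
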